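/- Let a₀, a₁, a₂, … be complex numbers and define c₀ = 1 and c_k = Σ_{j=0}^{k−1} c_j a_{k−1−j} for k ≥ 1. For r ≥ 1 let G_r be the (2r+1)×(2r+1) matrix with block row and column partition (r, 1, r) given by G_r = [[I_r − T_r T_r*, 0, Q_r], [0, 1, 0], [Q_r*, 0, I_r − T̃_r T̃_r*]], and let C_r be the (2r+1)×(2r+1) matrix C_r = D · P, where D is the block-diagonal matrix with diagonal blocks I_r (size r×r) and B_r (size (r+1)×(r+1)), and P is the (2r+1)×(2r+1) matrix with row partition (r+1, r) and column partition (r, r+1) whose top-left block is 0, top-right block is B_r*·J_{r+1}, bottom-left block is I_r, and bottom-right block is 0. Then M_{2r} = C_r · G_r · C_r* for every r ≥ 1. -/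

import Mathlib

open scoped Matrix ComplexConjugate

/-- The number of negative eigenvalues (with multiplicity) of a Hermitian complex
matrix; junk value `0` if the matrix is not Hermitian. -/
noncomputable def negEig {n : Type*} [Fintype n] [DecidableEq n]
    (A : Matrix n n ℂ) : ℕ :=
  if h : A.IsHermitian then Nat.card {i // h.eigenvalues i < 0} else 0

/-- The number of positive eigenvalues (with multiplicity) of a Hermitian complex
matrix; junk value `0` if the matrix is not Hermitian. -/
noncomputable def posEig {n : Type*} [Fintype n] [DecidableEq n]
    (A : Matrix n n ℂ) : ℕ :=
  if h : A.IsHermitian then Nat.card {i // 0 < h.eigenvalues i} else 0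

/-- The Schur kernel `K_S(w,z) = (1 - S(z) conj(S(w)))/(1 - z conj(w))`. -/
noncomputable def schurKer (S : ℂ → ℂ) (w z : ℂ) : ℂ :=
  (1 - S z * conj (S w)) / (1 - z * conj w)

/-- A Hermitian kernel `K` has exactly `κ` negative squares on `Ω`. -/
def HasNegSquares (Ω : Set ℂ) (K : ℂ → ℂ → ℂ) (κ : ℕ) : Prop :=
  (∀ (m : ℕ) (z : Fin m → ℂ), (∀ i, z i ∈ Ω) →
      negEig (Matrix.of fun i j => K (z j) (z i)) ≤ κ) ∧
  (∃ (m : ℕ) (z : Fin m → ℂ), (∀ i, z i ∈ Ω) ∧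
      negEig (Matrix.of fun i j => K (z j) (z i)) = κ)

/-- The `r×r` lower triangular Toeplitz matrix built from `a₀, a₁, …`. -/
def Tmat (a : ℕ → ℂ) (r : ℕ) : Matrix (Fin r) (Fin r) ℂ :=
  Matrix.of fun i j => if (j : ℕ) ≤ i then a ((i : ℕ) - j) else 0

/-- The `r×r` lower triangular Toeplitz matrix built from `conj a₀, conj a₁, …`. -/
def Ttil (a : ℕ → ℂ) (r : ℕ) : Matrix (Fin r) (Fin r) ℂ :=
  Matrix.of fun i j => if (j : ℕ) ≤ i then conj (a ((i : ℕ) - j)) else 0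

/-- The `r×r` Hankel matrix with entries `a_{i+j+1}`. -/
def Qmat (a : ℕ → ℂ) (r : ℕ) : Matrix (Fin r) (Fin r) ℂ :=
  Matrix.of fun i j => a ((i : ℕ) + j + 1)

/-- The `m×m` lower triangular Toeplitz matrix built from `c₀, c₁, …`. -/
def Bmat (c : ℕ → ℂ) (m : ℕ) : Matrix (Fin m) (Fin m) ℂ :=
  Matrix.of fun i j => if (j : ℕ) ≤ i then c ((i : ℕ) - j) else 0

/-- The `m×m` lower triangular Toeplitz matrix built from `conj c₀, conj c₁, …`. -/
def Btil (c : ℕ → ℂ) (m : ℕ) : Matrix (Fin m) (Fin m) ℂ :=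
  Matrix.of fun i j => if (j : ℕ) ≤ i then conj (c ((i : ℕ) - j)) else 0

/-- The `m×m` Hermitian Toeplitz matrix built from `c₀, c₁, …`
(`M_r` of the paper has size `r+1`, i.e. it is `Mmat c (r+1)`). -/
def Mmat (c : ℕ → ℂ) (m : ℕ) : Matrix (Fin m) (Fin m) ℂ :=
  Matrix.of fun i j =>
    if (j : ℕ) ≤ i then c ((i : ℕ) - j) else conj (c ((j : ℕ) - i))

/-- The `m×m` flip matrix, with ones on the antidiagonal. -/
def Jmat (m : ℕ) : Matrix (Fin m) (Fin m) ℂ :=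
  Matrix.of fun i j => if (i : ℕ) + j + 1 = m then 1 else 0

/-- Identification of `Fin m` with `Fin p ⊕ Fin q` when `m = p + q`. -/
def splitAt {p q m : ℕ} (h : m = p + q) : Fin m → Fin p ⊕ Fin q :=
  fun i =>
    if h' : (i : ℕ) < p then Sum.inl ⟨i, h'⟩
    else Sum.inr ⟨(i : ℕ) - p, by have := i.isLt; omega⟩

/-- The `m×m` block diagonal matrix `diag(A, D)` with `A` of size `p` and `D` of
size `q`, where `m = p + q`. -/
def dblock {p q m : ℕ} (h : m = p + q)
    (A : Matrix (Fin p) (Fin p) ℂ) (D : Matrix (Fin q) (Fin q) ℂ) :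
    Matrix (Fin m) (Fin m) ℂ :=
  (Matrix.fromBlocks A 0 0 D).submatrix (splitAt h) (splitAt h)

/-- The sequence `c` belongs to the class `P_ν`: `ν(M_r) = ν` for all
sufficiently large `r`. -/
def memP (c : ℕ → ℂ) (ν : ℕ) : Prop :=
  ∃ N, ∀ r ≥ N, negEig (Mmat c (r + 1)) = ν

/-- The sequence `c` belongs to the class `P_{ν,π}`: `ν(M_r) = ν` and
`π(M_r) = π` for all sufficiently large `r`. -/
def memPP (c : ℕ → ℂ) (ν π : ℕ) : Prop :=
  ∃ N, ∀ r ≥ N, negEig (Mmat c (r + 1)) = ν ∧ posEig (Mmat c (r + 1)) = π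

/-- The `(2r+1)×(2r+1)` matrix `G_r` with block row and column partition
`(r, 1, r)` given by
`[[I_r − T_r T_r*, 0, Q_r], [0, 1, 0], [Q_r*, 0, I_r − T̃_r T̃_r*]]`,
realized via the partition `(r, r+1)` with the lower right `(r+1)×(r+1)` corner
itself partitioned as `(1, r)`. -/
noncomputable def Gbig (a : ℕ → ℂ) (r : ℕ) : Matrix (Fin (2 * r + 1)) (Fin (2 * r + 1)) ℂ :=
  (Matrix.fromBlocks
      (1 - Tmat a r * (Tmat a r)ᴴ)
      (Matrix.of fun (i : Fin r) (j : Fin (r + 1)) =>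
        if h : 1 ≤ (j : ℕ) then
          Qmat a r i ⟨(j : ℕ) - 1, by have := j.isLt; omega⟩
        else 0)
      (Matrix.of fun (i : Fin (r + 1)) (j : Fin r) =>
        if h : 1 ≤ (i : ℕ) then
          conj (Qmat a r j ⟨(i : ℕ) - 1, by have := i.isLt; omega⟩)
        else 0)
      (dblock (by omega) (1 : Matrix (Fin 1) (Fin 1) ℂ)
        (1 - Ttil a r * (Ttil a r)ᴴ))).submatrix
    (splitAt (show 2 * r + 1 = r + (r + 1) by omega))
    (splitAt (show 2 * r + 1 = r + (r + 1) by omega))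

/-- The `(2r+1)×(2r+1)` matrix `C_r = D · P` where `D = diag(I_r, B_r)` (with
row and column partition `(r, r+1)`) and `P` is the matrix with row partition
`(r+1, r)` and column partition `(r, r+1)` with blocks
`[[0, B_r* J_{r+1}], [I_r, 0]]`. -/
noncomputable def Cbig (c : ℕ → ℂ) (r : ℕ) : Matrix (Fin (2 * r + 1)) (Fin (2 * r + 1)) ℂ :=
  ((Matrix.fromBlocks (1 : Matrix (Fin r) (Fin r) ℂ) 0 0
        (Bmat c (r + 1))).submatrix
      (splitAt (show 2 * r + 1 = r + (r + 1) by omega))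
      (splitAt (show 2 * r + 1 = r + (r + 1) by omega))) *
  ((Matrix.fromBlocks (0 : Matrix (Fin (r + 1)) (Fin r) ℂ)
        ((Bmat c (r + 1))ᴴ * Jmat (r + 1))
        (1 : Matrix (Fin r) (Fin r) ℂ) 0).submatrix
      (splitAt (show 2 * r + 1 = (r + 1) + r by omega))
      (splitAt (show 2 * r + 1 = r + (r + 1) by omega)))

open Finset

/-!
Write `B = B_r(c)` and let `N` be the lower-triangular Toeplitz matrix of the coefficients of
`z a(z)`. The recurrence says `c(z) = 1 + z a(z) c(z)`, i.e. `B N = B - I`, while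
`diag(1, I - T_r T_r*) = I - N N*`. Hence
`B diag(1, I - T_r T_r*) B* = B B* - (B - I)(B - I)* = B + B* - I = M_r`.
The mixed blocks reduce to the Hankel identity `B diag(1, Q_r) Bᵀ = (c_{s+t})_{s,t}`, whose left
side is shown to depend only on `s + t` by the same recurrence.

Row `r + s` of `C_r` is row `s` of `B_r` placed on the columns `r, 0, 1, …, r - 1`, and row
`r - s` is row `s` of `B̃_r` placed on the columns `r, r + 1, …, 2r`. So each of the four blocks
of `C_r G_r C_r*` cut out by these two families of rows is one of the identities above, for `c`
or for `conj c`, and it matches the corresponding block of `M_{2r}`.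
-/

section Support

variable {m n k₁ k₂ l₁ l₂ α : Type*} [Fintype n]

theorem Matrix.submatrix_mul_of_support {o p : Type*} [Fintype l₁] [NonUnitalNonAssocSemiring α]
    (A : Matrix m n α) (X : Matrix n o α) {f : k₁ → m} {e : l₁ → n} (g : p → o)
    (he : Function.Injective e) (hA : ∀ s, ∀ j ∉ Set.range e, A (f s) j = 0) :
    (A * X).submatrix f g = A.submatrix f e * X.submatrix e g := by
  ext s t
  exact (Fintype.sum_of_injective e he _ _ (fun j hj => by simp [hA s j hj])
    (fun _ => rfl)).symm

theorem Matrix.submatrix_mul_mul_conjTranspose_of_support [Fintype l₁] [Fintype l₂]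
    [NonUnitalSemiring α] [StarRing α] (A : Matrix m n α) (G : Matrix n n α) {f₁ : k₁ → m}
    {f₂ : k₂ → m} {e₁ : l₁ → n} {e₂ : l₂ → n} (he₁ : Function.Injective e₁)
    (he₂ : Function.Injective e₂) (hA₁ : ∀ s, ∀ j ∉ Set.range e₁, A (f₁ s) j = 0)
    (hA₂ : ∀ s, ∀ j ∉ Set.range e₂, A (f₂ s) j = 0) :
    (A * G * Aᴴ).submatrix f₁ f₂ =
      A.submatrix f₁ e₁ * G.submatrix e₁ e₂ * (A.submatrix f₂ e₂)ᴴ := by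
  have hright : (G * Aᴴ).submatrix e₁ f₂ = G.submatrix e₁ e₂ * (A.submatrix f₂ e₂)ᴴ :=
    calc (G * Aᴴ).submatrix e₁ f₂ = ((A * Gᴴ).submatrix f₂ e₁)ᴴ := by
          rw [Matrix.conjTranspose_submatrix, Matrix.conjTranspose_mul,
            Matrix.conjTranspose_conjTranspose]
      _ = (A.submatrix f₂ e₂ * Gᴴ.submatrix e₂ e₁)ᴴ := by
          rw [Matrix.submatrix_mul_of_support _ _ _ he₂ hA₂]
      _ = G.submatrix e₁ e₂ * (A.submatrix f₂ e₂)ᴴ := by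
          rw [Matrix.conjTranspose_mul, Matrix.conjTranspose_submatrix,
            Matrix.conjTranspose_conjTranspose]
  rw [Matrix.mul_assoc, Matrix.submatrix_mul_of_support _ _ _ he₁ hA₁, hright, Matrix.mul_assoc]

end Support

lemma Fin.sum_ite_val_lt_eq_sum_range {M : Type*} [AddCommMonoid M] {m s : ℕ} (hs : s ≤ m)
    (f : ℕ → M) : ∑ i : Fin m, (if (i : ℕ) < s then f i else 0) = ∑ i ∈ range s, f i := by
  rw [Fin.sum_univ_eq_sum_range (fun i => if i < s then f i else 0), ← sum_filter]
  congr 1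
  ext i
  simp only [mem_filter, mem_range]
  omega

section splitAt

variable {p q m : ℕ} (h : m = p + q) {i : Fin m}

lemma splitAt_of_lt (hi : (i : ℕ) < p) : splitAt h i = .inl ⟨i, hi⟩ := dif_pos hi

lemma splitAt_of_le (hi : p ≤ i) : splitAt h i = .inr ⟨i - p, by omega⟩ := dif_neg (by omega)

end splitAt

section dblock

variable {q : ℕ} (h : q + 1 = 1 + q) (A : Matrix (Fin 1) (Fin 1) ℂ)
  (X : Matrix (Fin q) (Fin q) ℂ)

@[simp] lemma dblock_zero_zero : dblock h A X 0 0 = A 0 0 := by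
  simp [dblock, splitAt]

@[simp] lemma dblock_zero_succ (j : Fin q) : dblock h A X 0 j.succ = 0 := by
  simp [dblock, splitAt]

@[simp] lemma dblock_succ_zero (i : Fin q) : dblock h A X i.succ 0 = 0 := by
  simp [dblock, splitAt]

@[simp] lemma dblock_succ_succ (i j : Fin q) : dblock h A X i.succ j.succ = X i j := by
  simp [dblock, splitAt]

end dblock

section Toeplitz

def shiftSeq (a : ℕ → ℂ) : ℕ → ℂ
  | 0 => 0
  | n + 1 => a n

lemma Tmat_apply_zero (x : ℕ → ℂ) {m : ℕ} (s : Fin (m + 1)) : Tmat x (m + 1) s 0 = x s := by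
  simp [Tmat]

lemma Tmat_apply_succ (x : ℕ → ℂ) {m : ℕ} (s : Fin (m + 1)) (i : Fin m) :
    Tmat x (m + 1) s i.succ = if (i : ℕ) < s then x (s - (i + 1)) else 0 := by
  simp only [Tmat, Matrix.of_apply, Fin.val_succ]
  exact if_congr (by omega) rfl rfl

theorem Tmat_mul_Tmat (x y : ℕ → ℂ) (m : ℕ) :
    Tmat x m * Tmat y m = Tmat (fun n => ∑ l ∈ range (n + 1), x (n - l) * y l) m := by
  ext i j
  simp only [Tmat, Matrix.mul_apply, Matrix.of_apply, ite_zero_mul_ite_zero]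
  split_ifs with hji
  · rw [Fin.sum_univ_eq_sum_range (fun k => if k ≤ i ∧ j ≤ k then x (i - k) * y (k - j) else 0),
      ← sum_filter]
    have hIco : (range m).filter (fun k => k ≤ (i : ℕ) ∧ (j : ℕ) ≤ k) = Ico (j : ℕ) (i + 1) := by
      ext k
      simp only [mem_filter, mem_range, mem_Ico]
      omega
    rw [hIco, sum_Ico_eq_sum_range, show (i : ℕ) + 1 - j = i - j + 1 by omega]
    refine sum_congr rfl fun l _ => ?_
    rw [Nat.add_sub_cancel_left, Nat.sub_sub]
  · exact sum_eq_zero fun k _ => if_neg (by omega)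

variable {a c : ℕ → ℂ}

lemma eq_sum_sub_mul_of_rec (hc : ∀ k : ℕ, c (k + 1) = ∑ j ∈ range (k + 1), c j * a (k - j))
    (n : ℕ) : c (n + 1) = ∑ l ∈ range (n + 1), c (n - l) * a l := by
  rw [hc, ← sum_range_reflect]
  refine sum_congr rfl fun l hl => ?_
  rw [mem_range] at hl
  rw [show n - (n + 1 - 1 - l) = l by omega, Nat.add_sub_cancel]

lemma eq_mul_add_sum_of_rec (hc : ∀ k : ℕ, c (k + 1) = ∑ j ∈ range (k + 1), c j * a (k - j))
    (n : ℕ) : c (n + 1) = c n * a 0 + ∑ k ∈ range n, c (n - (k + 1)) * a (k + 1) := by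
  rw [eq_sum_sub_mul_of_rec hc, sum_range_succ', add_comm, Nat.sub_zero]

lemma conj_rec (hc : ∀ k : ℕ, c (k + 1) = ∑ j ∈ range (k + 1), c j * a (k - j)) (k : ℕ) :
    conj (c (k + 1)) = ∑ j ∈ range (k + 1), conj (c j) * conj (a (k - j)) := by
  simp [hc k, map_sum]

theorem Tmat_mul_Tmat_shiftSeq (hc0 : c 0 = 1)
    (hc : ∀ k : ℕ, c (k + 1) = ∑ j ∈ range (k + 1), c j * a (k - j)) (m : ℕ) :
    Tmat c m * Tmat (shiftSeq a) m = Tmat c m - 1 := by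
  have hconv : ∀ n, ∑ l ∈ range (n + 1), c (n - l) * shiftSeq a l = c n - if n = 0 then 1 else 0
    | 0 => by simp [shiftSeq, hc0]
    | n + 1 => by
      rw [sum_range_succ', eq_sum_sub_mul_of_rec hc n]
      simp [shiftSeq]
  rw [Tmat_mul_Tmat]
  ext i j
  simp only [Tmat, hconv, Matrix.of_apply, Matrix.sub_apply, Matrix.one_apply, Fin.ext_iff]
  split_ifs <;> first | omega | ring

theorem Mmat_eq_Tmat_add_conjTranspose (hc0 : c 0 = 1) (m : ℕ) :
    Mmat c m = Tmat c m + (Tmat c m)ᴴ - 1 := by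
  ext i j
  simp only [Mmat, Tmat, Matrix.of_apply, Matrix.add_apply, Matrix.sub_apply,
    Matrix.conjTranspose_apply, Matrix.one_apply, Fin.ext_iff]
  split_ifs <;> first | omega | simp_all

theorem Tmat_mul_one_sub_mul_conjTranspose (hc0 : c 0 = 1)
    (hc : ∀ k : ℕ, c (k + 1) = ∑ j ∈ range (k + 1), c j * a (k - j)) (m : ℕ) :
    Tmat c m * (1 - Tmat (shiftSeq a) m * (Tmat (shiftSeq a) m)ᴴ) * (Tmat c m)ᴴ = Mmat c m := by
  set B := Tmat c m
  set N := Tmat (shiftSeq a) m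
  have hBN : B * N = B - 1 := Tmat_mul_Tmat_shiftSeq hc0 hc m
  calc B * (1 - N * Nᴴ) * Bᴴ = B * Bᴴ - (B * N) * (B * N)ᴴ := by
        rw [Matrix.conjTranspose_mul]; noncomm_ring
    _ = B + Bᴴ - 1 := by
        rw [hBN, Matrix.conjTranspose_sub, Matrix.conjTranspose_one]; noncomm_ring
    _ = Mmat c m := (Mmat_eq_Tmat_add_conjTranspose hc0 m).symm

theorem hankel_sum_of_rec (hc0 : c 0 = 1)
    (hc : ∀ k : ℕ, c (k + 1) = ∑ j ∈ range (k + 1), c j * a (k - j)) (s t : ℕ) :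
    c s * c t + ∑ i ∈ range s, ∑ k ∈ range t, c (s - (i + 1)) * a (i + k + 1) * c (t - (k + 1)) =
      c (s + t) := by
  set F : ℕ → ℕ → ℂ := fun s t => c s * c t +
    ∑ i ∈ range s, ∑ k ∈ range t, c (s - (i + 1)) * a (i + k + 1) * c (t - (k + 1))
  have hshift : ∀ s t, F (s + 1) t = F s (t + 1) := fun s t => by
    simp only [F, sum_range_succ', Nat.add_sub_add_right, Nat.sub_zero, sum_add_distrib]
    rw [sum_congr rfl fun i _ => sum_congr rfl fun k _ => by
      rw [show i + 1 + k + 1 = i + (k + 1) + 1 by omega]]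
    simp only [zero_add, add_zero, ← sum_mul, eq_mul_add_sum_of_rec hc s,
      eq_mul_add_sum_of_rec hc t]
    have hfirst : ∑ k ∈ range t, c s * a (k + 1) * c (t - (k + 1)) =
        c s * ∑ k ∈ range t, c (t - (k + 1)) * a (k + 1) := by
      rw [mul_sum]; exact sum_congr rfl fun _ _ => by ring
    rw [hfirst]
    ring
  change F s t = c (s + t)
  induction t generalizing s with
  | zero => simp [F, hc0]
  | succ t ih => rw [← hshift, ih, add_right_comm, add_assoc]

end Toeplitz

lemma Tmat_shiftSeq_succ_castSucc (x : ℕ → ℂ) {r : ℕ} (i k : Fin r) :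
    Tmat (shiftSeq x) (r + 1) i.succ k.castSucc = Tmat x r i k := by
  simp only [Tmat, Matrix.of_apply, Fin.val_succ, Fin.val_castSucc]
  by_cases hki : (k : ℕ) ≤ i
  · rw [if_pos (by omega), if_pos hki, show (i : ℕ) + 1 - k = (i - k) + 1 by omega, shiftSeq]
  · rw [if_neg hki]
    split_ifs
    · rw [show (i : ℕ) + 1 - k = 0 by omega, shiftSeq]
    · rfl

lemma Tmat_shiftSeq_succ_last (x : ℕ → ℂ) {r : ℕ} (i : Fin r) :
    Tmat (shiftSeq x) (r + 1) i.succ (Fin.last r) = 0 := by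
  simp only [Tmat, Matrix.of_apply, Fin.val_succ, Fin.val_last]
  split_ifs
  · rw [show (i : ℕ) + 1 - r = 0 by omega, shiftSeq]
  · rfl

theorem dblock_one_sub_Tmat_mul_conjTranspose (x : ℕ → ℂ) (r : ℕ) :
    dblock (Nat.add_comm r 1) 1 (1 - Tmat x r * (Tmat x r)ᴴ) =
      1 - Tmat (shiftSeq x) (r + 1) * (Tmat (shiftSeq x) (r + 1))ᴴ := by
  have hrow0 : ∀ k, Tmat (shiftSeq x) (r + 1) 0 k = 0 := fun k => by
    simp [Tmat, shiftSeq]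
  ext i j
  induction i using Fin.cases <;> induction j using Fin.cases <;>
    simp [Matrix.mul_apply, hrow0, Fin.sum_univ_castSucc, Tmat_shiftSeq_succ_castSucc,
      Tmat_shiftSeq_succ_last, Matrix.one_apply, (Fin.succ_ne_zero _).symm]

theorem Tmat_mul_dblock_Qmat_mul_conjTranspose {a c : ℕ → ℂ} (hc0 : c 0 = 1)
    (hc : ∀ k : ℕ, c (k + 1) = ∑ j ∈ range (k + 1), c j * a (k - j)) (r : ℕ) :
    Tmat c (r + 1) * dblock (Nat.add_comm r 1) 1 (Qmat a r) *
        (Tmat (fun n => conj (c n)) (r + 1))ᴴ = Matrix.of fun s t : Fin (r + 1) => c (s + t) := by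
  ext s t
  simp only [Matrix.mul_apply, Matrix.conjTranspose_apply, Fin.sum_univ_succ, dblock_zero_zero,
    dblock_zero_succ, dblock_succ_zero, dblock_succ_succ, Tmat_apply_zero, Tmat_apply_succ,
    Matrix.one_apply_eq, mul_zero, zero_add, mul_one, Complex.star_def, starRingEnd_self_apply,
    apply_ite (starRingEnd ℂ), map_zero, ite_mul, mul_ite, zero_mul, ite_self, sum_const_zero,
    add_zero, Qmat, Matrix.of_apply]
  have hs : (s : ℕ) ≤ r := Nat.lt_succ_iff.1 s.isLt
  have ht : (t : ℕ) ≤ r := Nat.lt_succ_iff.1 t.isLt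
  rw [← hankel_sum_of_rec hc0 hc, sum_comm (s := range s),
    Fin.sum_ite_val_lt_eq_sum_range ht fun k => (∑ i : Fin r,
      if (i : ℕ) < s then c (s - (i + 1)) * a (i + k + 1) else 0) * c (t - (k + 1))]
  congr 1
  refine sum_congr rfl fun k _ => ?_
  rw [Fin.sum_ite_val_lt_eq_sum_range hs
    fun i => c (s - (i + 1)) * a (i + k + 1), sum_mul]

def belowMid (r : ℕ) (s : Fin (r + 1)) : Fin (2 * r + 1) := ⟨r + s, by omega⟩

def aboveMid (r : ℕ) (s : Fin (r + 1)) : Fin (2 * r + 1) := ⟨r - s, by omega⟩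

def midFirst (r : ℕ) : Fin (r + 1) → Fin (2 * r + 1) :=
  Fin.cons ⟨r, by omega⟩ fun i => ⟨i, by omega⟩

section IndexMaps

variable {r : ℕ}

lemma mem_range_belowMid (α : Fin (2 * r + 1)) : α ∈ Set.range (belowMid r) ↔ r ≤ (α : ℕ) :=
  ⟨by rintro ⟨s, rfl⟩; simp [belowMid],
    fun h => ⟨⟨α - r, by omega⟩, Fin.ext (by simp only [belowMid]; omega)⟩⟩

lemma mem_range_aboveMid (α : Fin (2 * r + 1)) : α ∈ Set.range (aboveMid r) ↔ (α : ℕ) ≤ r :=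
  ⟨by rintro ⟨s, rfl⟩; simp [aboveMid],
    fun h => ⟨⟨r - α, by omega⟩, Fin.ext (by simp only [aboveMid]; omega)⟩⟩

lemma mem_range_midFirst (α : Fin (2 * r + 1)) : α ∈ Set.range (midFirst r) ↔ (α : ℕ) ≤ r := by
  refine ⟨by rintro ⟨s, rfl⟩; induction s using Fin.cases <;> simp [midFirst], fun h => ?_⟩
  rcases h.lt_or_eq with h | h
  · exact ⟨Fin.succ ⟨α, h⟩, by rw [midFirst, Fin.cons_succ]⟩
  · exact ⟨0, Fin.ext (by simp [midFirst, h])⟩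

lemma mem_range_belowMid_or_aboveMid (α : Fin (2 * r + 1)) :
    α ∈ Set.range (belowMid r) ∨ α ∈ Set.range (aboveMid r) := by
  rw [mem_range_belowMid, mem_range_aboveMid]
  exact le_total _ _

variable (r)

lemma belowMid_injective : Function.Injective (belowMid r) := fun s t h => by
  simpa [belowMid, Fin.ext_iff] using h

lemma aboveMid_injective : Function.Injective (aboveMid r) := fun s t h => by
  simp only [aboveMid, Fin.ext_iff] at h
  omega

lemma midFirst_injective : Function.Injective (midFirst r) := by
  intro s t h
  induction s using Fin.cases <;> induction t using Fin.cases <;>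
    simp only [midFirst, Fin.cons_zero, Fin.cons_succ, Fin.ext_iff, Fin.val_succ] at h ⊢ <;> omega

variable {r} (h : 2 * r + 1 = r + (r + 1)) (h' : 2 * r + 1 = (r + 1) + r)

@[simp] lemma splitAt_belowMid (s : Fin (r + 1)) : splitAt h (belowMid r s) = .inr s := by
  rw [splitAt_of_le h (by simp [belowMid])]; simp [belowMid]

@[simp] lemma splitAt_midFirst_zero : splitAt h (midFirst r 0) = .inr 0 := by
  rw [splitAt_of_le h (by simp [midFirst])]; simp [midFirst]

@[simp] lemma splitAt_midFirst_succ (i : Fin r) : splitAt h (midFirst r i.succ) = .inl i := by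
  rw [splitAt_of_lt h (by simp [midFirst])]; simp [midFirst]

@[simp] lemma splitAt_aboveMid_zero : splitAt h (aboveMid r 0) = .inr 0 := by
  rw [splitAt_of_le h (by simp [aboveMid])]; simp [aboveMid]

@[simp] lemma splitAt_aboveMid_succ (i : Fin r) : splitAt h (aboveMid r i.succ) = .inl i.rev := by
  rw [splitAt_of_lt h (by simp only [aboveMid, Fin.val_succ]; omega)]
  simp [aboveMid, Fin.ext_iff]

@[simp] lemma splitAt'_aboveMid (s : Fin (r + 1)) : splitAt h' (aboveMid r s) = .inl s.rev := by
  rw [splitAt_of_lt h' (by simp [aboveMid])]; simp [aboveMid, Fin.ext_iff]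

@[simp] lemma splitAt'_belowMid_zero : splitAt h' (belowMid r 0) = .inl (Fin.last r) := by
  rw [splitAt_of_lt h' (by simp [belowMid])]; simp [belowMid, Fin.ext_iff]

@[simp] lemma splitAt'_belowMid_succ (i : Fin r) : splitAt h' (belowMid r i.succ) = .inr i := by
  rw [splitAt_of_le h' (by simp [belowMid])]
  simp only [belowMid, Fin.val_succ, Sum.inr.injEq, Fin.ext_iff]
  omega

end IndexMaps

section Gbig

variable (a : ℕ → ℂ) (r : ℕ)

lemma Gbig_submatrix_midFirst_midFirst :
    (Gbig a r).submatrix (midFirst r) (midFirst r) =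
      dblock (Nat.add_comm r 1) 1 (1 - Tmat a r * (Tmat a r)ᴴ) := by
  ext i j
  induction i using Fin.cases <;> induction j using Fin.cases <;>
    simp [Gbig, midFirst, splitAt, dblock]

lemma Gbig_submatrix_belowMid_belowMid :
    (Gbig a r).submatrix (belowMid r) (belowMid r) =
      dblock (Nat.add_comm r 1) 1 (1 - Ttil a r * (Ttil a r)ᴴ) := by
  ext i j
  simp [Gbig, belowMid, splitAt]

lemma Gbig_submatrix_midFirst_belowMid :
    (Gbig a r).submatrix (midFirst r) (belowMid r) = dblock (Nat.add_comm r 1) 1 (Qmat a r) := by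
  ext i j
  induction i using Fin.cases <;> induction j using Fin.cases <;>
    simp [Gbig, midFirst, belowMid, splitAt, dblock]

lemma Gbig_submatrix_belowMid_midFirst :
    (Gbig a r).submatrix (belowMid r) (midFirst r) = dblock (Nat.add_comm r 1) 1 (Qmat a r)ᴴ := by
  ext i j
  induction i using Fin.cases <;> induction j using Fin.cases <;>
    simp [Gbig, midFirst, belowMid, splitAt, dblock]

end Gbig

lemma mul_Jmat {k m : ℕ} (A : Matrix (Fin k) (Fin m) ℂ) : A * Jmat m = A.submatrix id Fin.rev := by
  have hJ : Jmat m = (1 : Matrix (Fin m) (Fin m) ℂ).submatrix (Equiv.refl _) Fin.rev := by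
    ext i j
    simp only [Jmat, Matrix.of_apply, Matrix.submatrix_apply, Equiv.refl_apply,
      Matrix.one_apply, Fin.ext_iff, Fin.val_rev]
    exact if_congr (by omega) rfl rfl
  rw [hJ, Matrix.mul_submatrix_one]
  rfl

lemma conjTranspose_Bmat_mul_Jmat (c : ℕ → ℂ) (m : ℕ) :
    (Bmat c m)ᴴ * Jmat m = (Btil c m).submatrix Fin.rev id := by
  rw [mul_Jmat]
  ext i j
  simp only [Bmat, Btil, Matrix.submatrix_apply, Matrix.conjTranspose_apply, Matrix.of_apply, id,
    Fin.val_rev, apply_ite star, star_zero, Complex.star_def]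
  exact if_congr (by omega) (by congr 2; omega) rfl

section Cbig

variable (c : ℕ → ℂ) (r : ℕ)

def Dbig : Matrix (Fin (2 * r + 1)) (Fin (2 * r + 1)) ℂ :=
  (Matrix.fromBlocks (1 : Matrix (Fin r) (Fin r) ℂ) 0 0 (Bmat c (r + 1))).submatrix
    (splitAt (show 2 * r + 1 = r + (r + 1) by omega))
    (splitAt (show 2 * r + 1 = r + (r + 1) by omega))

def Pbig : Matrix (Fin (2 * r + 1)) (Fin (2 * r + 1)) ℂ :=
  (Matrix.fromBlocks (0 : Matrix (Fin (r + 1)) (Fin r) ℂ) ((Bmat c (r + 1))ᴴ * Jmat (r + 1))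
    (1 : Matrix (Fin r) (Fin r) ℂ) 0).submatrix
    (splitAt (show 2 * r + 1 = (r + 1) + r by omega))
    (splitAt (show 2 * r + 1 = r + (r + 1) by omega))

lemma Cbig_eq_Dbig_mul_Pbig : Cbig c r = Dbig c r * Pbig c r := rfl

lemma Dbig_belowMid_apply (s : Fin (r + 1)) (k : Fin (2 * r + 1))
    (hk : k ∉ Set.range (belowMid r)) : Dbig c r (belowMid r s) k = 0 := by
  rw [mem_range_belowMid, not_le] at hk
  simp [Dbig, splitAt_of_lt _ hk]

lemma Dbig_submatrix_belowMid :
    (Dbig c r).submatrix (belowMid r) (belowMid r) = Tmat c (r + 1) := by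
  ext s t
  simp [Dbig, Bmat, Tmat]

lemma Dbig_aboveMid_apply (s : Fin (r + 1)) (k : Fin (2 * r + 1))
    (hk : k ∉ Set.range (aboveMid r)) : Dbig c r (aboveMid r s) k = 0 := by
  rw [mem_range_aboveMid, not_le] at hk
  induction s using Fin.cases <;>
    simp [Dbig, splitAt_of_le _ hk.le, Bmat, (Nat.sub_pos_of_lt hk).ne']

lemma Pbig_belowMid_apply (s : Fin (r + 1)) (α : Fin (2 * r + 1))
    (hα : α ∉ Set.range (midFirst r)) : Pbig c r (belowMid r s) α = 0 := by
  rw [mem_range_midFirst, not_le] at hα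
  induction s using Fin.cases <;>
    simp [Pbig, splitAt_of_le _ hα.le, conjTranspose_Bmat_mul_Jmat, Btil,
      (Nat.sub_pos_of_lt hα).ne']

lemma Pbig_submatrix_aboveMid_belowMid :
    (Pbig c r).submatrix (aboveMid r) (belowMid r) = Tmat (fun n => conj (c n)) (r + 1) := by
  ext s t
  simp [Pbig, conjTranspose_Bmat_mul_Jmat, Btil, Tmat]

lemma Pbig_aboveMid_apply (s : Fin (r + 1)) (α : Fin (2 * r + 1))
    (hα : α ∉ Set.range (belowMid r)) : Pbig c r (aboveMid r s) α = 0 := by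
  rw [mem_range_belowMid, not_le] at hα
  simp [Pbig, splitAt_of_lt _ hα]

lemma Cbig_belowMid_apply (s : Fin (r + 1)) (α : Fin (2 * r + 1))
    (hα : α ∉ Set.range (midFirst r)) : Cbig c r (belowMid r s) α = 0 := by
  have h := congr_fun₂ (Matrix.submatrix_mul_of_support _ (Pbig c r) id (belowMid_injective r)
    (Dbig_belowMid_apply c r)) s α
  simp only [Matrix.submatrix_apply, id, ← Cbig_eq_Dbig_mul_Pbig] at h
  simp [h, Matrix.mul_apply, Pbig_belowMid_apply c r _ α hα]

lemma Cbig_aboveMid_apply (s : Fin (r + 1)) (α : Fin (2 * r + 1))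
    (hα : α ∉ Set.range (belowMid r)) : Cbig c r (aboveMid r s) α = 0 := by
  have h := congr_fun₂ (Matrix.submatrix_mul_of_support _ (Pbig c r) id (aboveMid_injective r)
    (Dbig_aboveMid_apply c r)) s α
  simp only [Matrix.submatrix_apply, id, ← Cbig_eq_Dbig_mul_Pbig] at h
  simp [h, Matrix.mul_apply, Pbig_aboveMid_apply c r _ α hα]

variable {c}

lemma Dbig_submatrix_aboveMid (hc0 : c 0 = 1) :
    (Dbig c r).submatrix (aboveMid r) (aboveMid r) = 1 := by
  ext s t
  induction s using Fin.cases <;> induction t using Fin.cases <;>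
    simp [Dbig, Bmat, hc0, Matrix.one_apply, (Fin.succ_ne_zero _).symm]

lemma Pbig_submatrix_belowMid_midFirst (hc0 : c 0 = 1) :
    (Pbig c r).submatrix (belowMid r) (midFirst r) = 1 := by
  ext s t
  induction s using Fin.cases <;> induction t using Fin.cases <;>
    simp [Pbig, conjTranspose_Bmat_mul_Jmat, Btil, hc0, Matrix.one_apply,
      (Fin.succ_ne_zero _).symm]

lemma Cbig_submatrix_belowMid_midFirst (hc0 : c 0 = 1) :
    (Cbig c r).submatrix (belowMid r) (midFirst r) = Tmat c (r + 1) := by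
  rw [Cbig_eq_Dbig_mul_Pbig, Matrix.submatrix_mul_of_support _ _ _ (belowMid_injective r)
    (Dbig_belowMid_apply c r), Dbig_submatrix_belowMid, Pbig_submatrix_belowMid_midFirst r hc0,
    Matrix.mul_one]

lemma Cbig_submatrix_aboveMid_belowMid (hc0 : c 0 = 1) :
    (Cbig c r).submatrix (aboveMid r) (belowMid r) = Tmat (fun n => conj (c n)) (r + 1) := by
  rw [Cbig_eq_Dbig_mul_Pbig, Matrix.submatrix_mul_of_support _ _ _ (aboveMid_injective r)
    (Dbig_aboveMid_apply c r), Dbig_submatrix_aboveMid r hc0, Pbig_submatrix_aboveMid_belowMid,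
    Matrix.one_mul]

end Cbig

section Mmat

variable (c : ℕ → ℂ) (r : ℕ)

lemma Mmat_submatrix_belowMid :
    (Mmat c (2 * r + 1)).submatrix (belowMid r) (belowMid r) = Mmat c (r + 1) := by
  ext s t
  simp [Mmat, belowMid, Nat.add_sub_add_left]

lemma Mmat_submatrix_belowMid_aboveMid :
    (Mmat c (2 * r + 1)).submatrix (belowMid r) (aboveMid r) =
      Matrix.of fun s t : Fin (r + 1) => c (s + t) := by
  ext s t
  simp only [Mmat, belowMid, aboveMid, Matrix.submatrix_apply, Matrix.of_apply]
  rw [if_pos (by omega)]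
  congr 1
  omega

variable {c}

lemma Mmat_submatrix_aboveMid (hc0 : c 0 = 1) :
    (Mmat c (2 * r + 1)).submatrix (aboveMid r) (aboveMid r) =
      Mmat (fun n => conj (c n)) (r + 1) := by
  ext s t
  simp only [Mmat, aboveMid, Matrix.submatrix_apply, Matrix.of_apply, starRingEnd_self_apply]
  split_ifs with hts hts' hts'
  · simp [show (s : ℕ) = t by omega, hc0]
  · congr 1; omega
  · congr 2; omega
  · omega

lemma Mmat_submatrix_aboveMid_belowMid (hc0 : c 0 = 1) :
    (Mmat c (2 * r + 1)).submatrix (aboveMid r) (belowMid r) =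
      Matrix.of fun s t : Fin (r + 1) => conj (c (s + t)) := by
  ext s t
  simp only [Mmat, belowMid, aboveMid, Matrix.submatrix_apply, Matrix.of_apply]
  split_ifs
  · simp [show (s : ℕ) + t = 0 by omega, show r - s - (r + t) = 0 by omega, hc0]
  · congr 2; omega

end Mmat

lemma Ttil_eq_Tmat (a : ℕ → ℂ) (r : ℕ) : Ttil a r = Tmat (fun n => conj (a n)) r := rfl

lemma conjTranspose_Qmat (a : ℕ → ℂ) (r : ℕ) : (Qmat a r)ᴴ = Qmat (fun n => conj (a n)) r := by
  ext i j
  simp [Qmat, add_comm (i : ℕ)]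

section Blocks

variable {a c : ℕ → ℂ} (r : ℕ)

lemma Cbig_Gbig_submatrix_belowMid_belowMid (hc0 : c 0 = 1)
    (hc : ∀ k : ℕ, c (k + 1) = ∑ j ∈ range (k + 1), c j * a (k - j)) :
    (Cbig c r * Gbig a r * (Cbig c r)ᴴ).submatrix (belowMid r) (belowMid r) =
      (Mmat c (2 * r + 1)).submatrix (belowMid r) (belowMid r) := by
  rw [Matrix.submatrix_mul_mul_conjTranspose_of_support _ _ (midFirst_injective r)
      (midFirst_injective r) (Cbig_belowMid_apply c r) (Cbig_belowMid_apply c r),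
    Cbig_submatrix_belowMid_midFirst r hc0, Gbig_submatrix_midFirst_midFirst,
    dblock_one_sub_Tmat_mul_conjTranspose, Tmat_mul_one_sub_mul_conjTranspose hc0 hc,
    Mmat_submatrix_belowMid]

lemma Cbig_Gbig_submatrix_aboveMid_aboveMid (hc0 : c 0 = 1)
    (hc : ∀ k : ℕ, c (k + 1) = ∑ j ∈ range (k + 1), c j * a (k - j)) :
    (Cbig c r * Gbig a r * (Cbig c r)ᴴ).submatrix (aboveMid r) (aboveMid r) =
      (Mmat c (2 * r + 1)).submatrix (aboveMid r) (aboveMid r) := by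
  rw [Matrix.submatrix_mul_mul_conjTranspose_of_support _ _ (belowMid_injective r)
      (belowMid_injective r) (Cbig_aboveMid_apply c r) (Cbig_aboveMid_apply c r),
    Cbig_submatrix_aboveMid_belowMid r hc0, Gbig_submatrix_belowMid_belowMid, Ttil_eq_Tmat,
    dblock_one_sub_Tmat_mul_conjTranspose,
    Tmat_mul_one_sub_mul_conjTranspose (by simp [hc0]) (conj_rec hc),
    Mmat_submatrix_aboveMid r hc0]

lemma Cbig_Gbig_submatrix_belowMid_aboveMid (hc0 : c 0 = 1)
    (hc : ∀ k : ℕ, c (k + 1) = ∑ j ∈ range (k + 1), c j * a (k - j)) :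
    (Cbig c r * Gbig a r * (Cbig c r)ᴴ).submatrix (belowMid r) (aboveMid r) =
      (Mmat c (2 * r + 1)).submatrix (belowMid r) (aboveMid r) := by
  rw [Matrix.submatrix_mul_mul_conjTranspose_of_support _ _ (midFirst_injective r)
      (belowMid_injective r) (Cbig_belowMid_apply c r) (Cbig_aboveMid_apply c r),
    Cbig_submatrix_belowMid_midFirst r hc0, Cbig_submatrix_aboveMid_belowMid r hc0,
    Gbig_submatrix_midFirst_belowMid, Tmat_mul_dblock_Qmat_mul_conjTranspose hc0 hc,
    Mmat_submatrix_belowMid_aboveMid]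

lemma Cbig_Gbig_submatrix_aboveMid_belowMid (hc0 : c 0 = 1)
    (hc : ∀ k : ℕ, c (k + 1) = ∑ j ∈ range (k + 1), c j * a (k - j)) :
    (Cbig c r * Gbig a r * (Cbig c r)ᴴ).submatrix (aboveMid r) (belowMid r) =
      (Mmat c (2 * r + 1)).submatrix (aboveMid r) (belowMid r) := by
  have hconj := Tmat_mul_dblock_Qmat_mul_conjTranspose (a := fun n => conj (a n))
    (c := fun n => conj (c n)) (by simp [hc0]) (conj_rec hc) r
  simp only [starRingEnd_self_apply] at hconj
  rw [Matrix.submatrix_mul_mul_conjTranspose_of_support _ _ (belowMid_injective r)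
      (midFirst_injective r) (Cbig_aboveMid_apply c r) (Cbig_belowMid_apply c r),
    Cbig_submatrix_aboveMid_belowMid r hc0, Cbig_submatrix_belowMid_midFirst r hc0,
    Gbig_submatrix_belowMid_midFirst, conjTranspose_Qmat, hconj,
    Mmat_submatrix_aboveMid_belowMid r hc0]

end Blocks

theorem Mmat_two_mul_eq_Cbig_Gbig_mul_general
    (a c : ℕ → ℂ) (hc0 : c 0 = 1)
    (hc : ∀ k : ℕ, c (k + 1) = ∑ j ∈ Finset.range (k + 1), c j * a (k - j))
    (r : ℕ) :
    Mmat c (2 * r + 1) = Cbig c r * Gbig a r * (Cbig c r)ᴴ := by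
  ext p q
  obtain ⟨s, rfl⟩ | ⟨s, rfl⟩ := mem_range_belowMid_or_aboveMid p <;>
    obtain ⟨t, rfl⟩ | ⟨t, rfl⟩ := mem_range_belowMid_or_aboveMid q
  · exact (congr_fun₂ (Cbig_Gbig_submatrix_belowMid_belowMid r hc0 hc) s t).symm
  · exact (congr_fun₂ (Cbig_Gbig_submatrix_belowMid_aboveMid r hc0 hc) s t).symm
  · exact (congr_fun₂ (Cbig_Gbig_submatrix_aboveMid_belowMid r hc0 hc) s t).symm
  · exact (congr_fun₂ (Cbig_Gbig_submatrix_aboveMid_aboveMid r hc0 hc) s t).symm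

/-- `M_{2r} = C_r G_r C_r*`. -/
theorem Mmat_two_mul_eq_Cbig_Gbig_mul
    (a c : ℕ → ℂ) (hc0 : c 0 = 1)
    (hc : ∀ k : ℕ, c (k + 1) = ∑ j ∈ Finset.range (k + 1), c j * a (k - j))
    (r : ℕ) (hr : 1 ≤ r) :
    Mmat c (2 * r + 1) = Cbig c r * Gbig a r * (Cbig c r)ᴴ :=
  Mmat_two_mul_eq_Cbig_Gbig_mul_general a c hc0 hc r
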